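/- arXiv:1406.6680 — 2 statements merged into one kernel-verified Lean document; each statement's English description precedes it below -/
import Mathlib

section
/- Let U be a critical two-dimensional update family with difficulty α, let u ∈ S¹ be a rational direction with α(u) ≤ α, and let Z be voracious with respect to u. Then [H_u ∪ Z] ∩ ℓ_u is semi-periodic, i.e. there exist a ∈ ℓ_u and k ∈ ℕ such that a + k·ℓ_u⁺ ⊆ [H_u ∪ Z] ∩ ℓ_u or a + k·ℓ_u⁻ ⊆ [H_u ∪ Z] ∩ ℓ_u. -/
open MeasureTheory Filter Set

namespace BP

/-- A site of the two-dimensional lattice `ℤ²`. -/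
abbrev Site := ℤ × ℤ

/-- One step of the `U`-bootstrap process: a site becomes infected if some update rule,
translated by it, is already entirely infected. -/
def step (U : Finset (Finset Site)) (A : Set Site) : Set Site :=
  A ∪ {x : Site | ∃ X ∈ U, ∀ y ∈ X, x + y ∈ A}

/-- The sets `A_t` of the `U`-bootstrap process. -/
def iter (U : Finset (Finset Site)) (A : Set Site) : ℕ → Set Site
  | 0 => A
  | t + 1 => step U (iter U A t)

/-- The closure `[A]` of `A` under the `U`-bootstrap process. -/
def bclosure (U : Finset (Finset Site)) (A : Set Site) : Set Site :=
  ⋃ t : ℕ, iter U A t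

/-- The inner product of a site with a real vector. -/
noncomputable def ip (x : Site) (u : ℝ × ℝ) : ℝ := (x.1 : ℝ) * u.1 + (x.2 : ℝ) * u.2

/-- The inner product of two real vectors. -/
noncomputable def ipR (v w : ℝ × ℝ) : ℝ := v.1 * w.1 + v.2 * w.2

/-- `u` is a unit vector, i.e. an element of `S¹`. -/
def unitVec (u : ℝ × ℝ) : Prop := u.1 ^ 2 + u.2 ^ 2 = 1

/-- The discrete half-plane `H_u = {x : ⟨x,u⟩ < 0}`. -/
def halfPlane (u : ℝ × ℝ) : Set Site := {x : Site | ip x u < 0}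

/-- `u` is a stable direction for `U`: the half-plane `H_u` is closed under the process. -/
def IsStable (U : Finset (Finset Site)) (u : ℝ × ℝ) : Prop :=
  bclosure U (halfPlane u) = halfPlane u

/-- The stable set `S = S(U)`, as a set of unit vectors. -/
def stableSet (U : Finset (Finset Site)) : Set (ℝ × ℝ) :=
  {u | unitVec u ∧ IsStable U u}

/-- The discrete line `ℓ_u` through the origin perpendicular to `u`. -/
def line (u : ℝ × ℝ) : Set Site := {x | ip x u = 0}

/-- The perpendicular vector pointing to the right as one looks in the direction `u`. -/
def rightPerp (u : ℝ × ℝ) : ℝ × ℝ := (u.2, -u.1)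

/-- `ℓ_u⁺`: the origin together with the sites of `ℓ_u` to the right of the origin
(as one looks in the direction `u`). -/
def linePlus (u : ℝ × ℝ) : Set Site := {x | ip x u = 0 ∧ 0 ≤ ip x (rightPerp u)}

/-- `ℓ_u⁻`: the origin together with the sites of `ℓ_u` to the left of the origin. -/
def lineMinus (u : ℝ × ℝ) : Set Site := {x | ip x u = 0 ∧ ip x (rightPerp u) ≤ 0}

/-- `α⁺(u)`: the minimum cardinality of a finite set `Z ⊆ ℤ²` such that `[H_u ∪ Z]`
contains infinitely many sites of `ℓ_u⁺` (and `⊤ = ∞` if there is no such set). -/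
noncomputable def alphaPlus (U : Finset (Finset Site)) (u : ℝ × ℝ) : ℕ∞ :=
  sInf {n : ℕ∞ | ∃ Z : Finset Site, (Z.card : ℕ∞) = n ∧
    (bclosure U (halfPlane u ∪ ↑Z) ∩ linePlus u).Infinite}

/-- `α⁻(u)`: as `α⁺(u)`, but for `ℓ_u⁻`. -/
noncomputable def alphaMinus (U : Finset (Finset Site)) (u : ℝ × ℝ) : ℕ∞ :=
  sInf {n : ℕ∞ | ∃ Z : Finset Site, (Z.card : ℕ∞) = n ∧
    (bclosure U (halfPlane u ∪ ↑Z) ∩ lineMinus u).Infinite}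

/-- The difficulty `α(u)` of a direction `u`: `min {α⁺(u), α⁻(u)}` if both are finite,
and `∞` otherwise. -/
noncomputable def difficulty (U : Finset (Finset Site)) (u : ℝ × ℝ) : ℕ∞ :=
  if alphaPlus U u ≠ ⊤ ∧ alphaMinus U u ≠ ⊤ then min (alphaPlus U u) (alphaMinus U u)
  else ⊤

/-- `ᾱ(u) = min {α⁺(u), α⁻(u)}`. -/
noncomputable def alphaBar (U : Finset (Finset Site)) (u : ℝ × ℝ) : ℕ∞ :=
  min (alphaPlus U u) (alphaMinus U u)

/-- The difficulty `α = α(U)` of the update family `U`: the minimum over open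
semicircles `C` of the maximum of `α(u)` over `u ∈ C`.  (An open semicircle is
parametrised by its midpoint `w`.) -/
noncomputable def famDifficulty (U : Finset (Finset Site)) : ℕ∞ :=
  ⨅ (w : ℝ × ℝ) (_ : unitVec w),
    ⨆ (u : ℝ × ℝ) (_ : unitVec u) (_ : 0 < ipR u w), difficulty U u

/-- `U` is critical: some (closed) semicircle has finite intersection with the stable
set, and every open semicircle meets the stable set. -/
def Critical (U : Finset (Finset Site)) : Prop :=
  (∃ w : ℝ × ℝ, unitVec w ∧ (stableSet U ∩ {u | 0 ≤ ipR u w}).Finite) ∧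
  (∀ w : ℝ × ℝ, unitVec w → (stableSet U ∩ {u | 0 < ipR u w}).Nonempty)

/-- The balancedness condition: some closed semicircle `C` has `α(u) ≤ α(U)`
for every `u ∈ C`.  A critical family is balanced iff this holds, unbalanced otherwise. -/
def BalancedCond (U : Finset (Finset Site)) : Prop :=
  ∃ w : ℝ × ℝ, unitVec w ∧
    ∀ u : ℝ × ℝ, unitVec u → 0 ≤ ipR u w → difficulty U u ≤ famDifficulty U

/-- The time `τ` at which the origin is infected (`⊤ = ∞` if it never is). -/
noncomputable def tau (U : Finset (Finset Site)) (A : Set Site) : ℕ∞ :=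
  ⨅ (t : ℕ) (_ : (0 : Site) ∈ iter U A t), (t : ℕ∞)

/-- Configurations of initially infected sites in the plane. -/
abbrev Config := Site → Bool

/-- The set of initially infected sites of a configuration. -/
def initSet (ω : Config) : Set Site := {x | ω x = true}

/-- `μ` is the product Bernoulli(`p`) measure (law of a "`p`-random set"): a probability
measure giving every cylinder event its product probability. -/
def IsBernoulliProduct {ι : Type*} (p : ℝ) (μ : Measure (ι → Bool)) : Prop :=
  IsProbabilityMeasure μ ∧
    ∀ S : Finset ι, ∀ f : ι → Bool,
      μ {ω | ∀ x ∈ S, ω x = f x} =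
        ∏ x ∈ S, if f x then ENNReal.ofReal p else ENNReal.ofReal (1 - p)

/-- Reduction of a site modulo `n`, giving a point of the torus `ℤ_n²`. -/
def projT (n : ℕ) (y : Site) : ZMod n × ZMod n := ((y.1 : ZMod n), (y.2 : ZMod n))

/-- One step of the `U`-bootstrap process on the torus `ℤ_n²`. -/
def stepT (n : ℕ) (U : Finset (Finset Site)) (A : Set (ZMod n × ZMod n)) :
    Set (ZMod n × ZMod n) :=
  A ∪ {x | ∃ X ∈ U, ∀ y ∈ X, x + projT n y ∈ A}

/-- The sets `A_t` of the `U`-bootstrap process on the torus. -/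
def iterT (n : ℕ) (U : Finset (Finset Site)) (A : Set (ZMod n × ZMod n)) :
    ℕ → Set (ZMod n × ZMod n)
  | 0 => A
  | t + 1 => stepT n U (iterT n U A t)

/-- The closure of `A` under the `U`-bootstrap process on the torus. -/
def bclosureT (n : ℕ) (U : Finset (Finset Site)) (A : Set (ZMod n × ZMod n)) :
    Set (ZMod n × ZMod n) :=
  ⋃ t : ℕ, iterT n U A t

/-- `A` percolates on the torus `ℤ_n²`. -/
def PercolatesT (n : ℕ) (U : Finset (Finset Site)) (A : Set (ZMod n × ZMod n)) : Prop :=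
  bclosureT n U A = Set.univ

/-- The critical probability `p_c(ℤ_n², U)`, where `P` is the family of product
Bernoulli measures on subsets of the torus. -/
noncomputable def pcT (n : ℕ) (U : Finset (Finset Site))
    (P : ℝ → Measure ((ZMod n × ZMod n) → Bool)) : ℝ :=
  sInf {p : ℝ | p ∈ Set.Icc (0 : ℝ) 1 ∧
    1 / 2 ≤ P p {ω | PercolatesT n U {x | ω x = true}}}

/-- The Euclidean (`ℓ₂`) distance between two sites. -/
noncomputable def dist2 (x y : Site) : ℝ :=
  Real.sqrt ((((x.1 - y.1 : ℤ) : ℝ)) ^ 2 + (((x.2 - y.2 : ℤ) : ℝ)) ^ 2)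

/-- A set of sites is (strongly) connected in the graph `G_κ` joining sites at
Euclidean distance at most `κ`. -/
def Conn (κ : ℝ) (S : Set Site) : Prop :=
  ∀ x ∈ S, ∀ y ∈ S,
    Relation.ReflTransGen (fun a b : Site => b ∈ S ∧ dist2 a b ≤ κ) x y

/-- The range `ν` of the update family:
`ν = max {‖x − y‖₂ : x, y ∈ X ∪ {0}, X ∈ U}`. -/
noncomputable def nu (U : Finset (Finset Site)) : ℝ :=
  sSup {d : ℝ | ∃ X ∈ U, ∃ x ∈ insert (0 : Site) X, ∃ y ∈ insert (0 : Site) X,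
    d = dist2 x y}

/-- The diameter of a set of sites. -/
noncomputable def diam2 (K : Set Site) : ℝ :=
  sSup {d : ℝ | ∃ x ∈ K, ∃ y ∈ K, d = dist2 x y}

/-- The projection `π(K, u) = max {|⟨x − y, u⟩| : x, y ∈ K}`. -/
noncomputable def proj (K : Set Site) (u : ℝ × ℝ) : ℝ :=
  sSup {d : ℝ | ∃ x ∈ K, ∃ y ∈ K, d = |ip x u - ip y u|}

/-- A `T`-droplet: a nonempty intersection of translated half-planes `H_u + a_u`,
`u ∈ T`. -/
def IsDroplet (T : Set (ℝ × ℝ)) (D : Set Site) : Prop :=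
  D.Nonempty ∧ ∃ a : (ℝ × ℝ) → Site, D = ⋂ u ∈ T, {x : Site | ip (x - a u) u < 0}

/-- `D` is the smallest `T`-droplet containing `K`. -/
def IsMinDroplet (T : Set (ℝ × ℝ)) (K D : Set Site) : Prop :=
  IsDroplet T D ∧ K ⊆ D ∧ ∀ D' : Set Site, IsDroplet T D' → K ⊆ D' → D ⊆ D'

/-- An `a`-cluster: a strongly connected set of `a` sites. -/
def IsCluster (κ : ℝ) (a : ℕ) (B : Finset Site) : Prop :=
  B.card = a ∧ Conn κ ↑B

/-- One step of the `α`-covering algorithm: two droplets of the current collection lying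
within strong-connectivity reach of a common translate of `D̂` are replaced by the
smallest `S_B`-droplet containing their union. -/
inductive CoverStep (SB : Set (ℝ × ℝ)) (κ : ℝ) (Dhat : Set Site) :
    Multiset (Set Site) → Multiset (Set Site) → Prop
  | merge (rest : Multiset (Set Site)) (D₁ D₂ D' : Set Site) (x : Site) :
      Conn κ (D₁ ∪ D₂ ∪ ((fun z => z + x) '' Dhat)) →
      IsMinDroplet SB (D₁ ∪ D₂) D' →
      CoverStep SB κ Dhat (D₁ ::ₘ D₂ ::ₘ rest) (D' ::ₘ rest)

/-- `𝒟` is an `α`-cover of `K`: a possible output of the `α`-covering algorithm, started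
from a maximal collection of pairwise disjoint `a`-clusters of `K`, each contained in a
translate of `D̂`. -/
def IsAlphaCover (κ : ℝ) (a : ℕ) (SB : Set (ℝ × ℝ)) (Dhat : Set Site)
    (K : Set Site) (𝒟 : Multiset (Set Site)) : Prop :=
  ∃ B : List (Finset Site), ∃ c : List Site,
    B.length = c.length ∧
    (∀ Bi ∈ B, IsCluster κ a Bi ∧ ↑Bi ⊆ K) ∧
    B.Pairwise (fun B₁ B₂ => Disjoint B₁ B₂) ∧
    (∀ B' : Finset Site, IsCluster κ a B' → ↑B' ⊆ K → ∃ Bi ∈ B, ¬ Disjoint B' Bi) ∧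
    (∀ i : ℕ, ∀ h₁ : i < B.length, ∀ h₂ : i < c.length,
      ↑(B.get ⟨i, h₁⟩) ⊆ (fun z => z + c.get ⟨i, h₂⟩) '' Dhat) ∧
    Relation.ReflTransGen (CoverStep SB κ Dhat)
      ↑(c.map fun v => (fun z => z + v) '' Dhat) 𝒟

/-- The droplet `D` is `α`-covered (with respect to the initial set `A`). -/
def AlphaCovered (κ : ℝ) (a : ℕ) (SB : Set (ℝ × ℝ)) (Dhat : Set Site)
    (A D : Set Site) : Prop :=
  IsAlphaCover κ a SB Dhat (D ∩ A) {D}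

/-- The constant `ρ` used for balanced families:
`ρ = max {‖y − Z‖₂ : u ∈ S_B, |Z| = α − 1, y ∈ [H_u ∪ Z] ∖ H_u}`. -/
noncomputable def rho (U : Finset (Finset Site)) (SB : Set (ℝ × ℝ)) (a : ℕ) : ℝ :=
  sSup {d : ℝ | ∃ u ∈ SB, ∃ Z : Finset Site, Z.card = a - 1 ∧
    ∃ y ∈ bclosure U (halfPlane u ∪ ↑Z) \ halfPlane u,
      d = sInf {r : ℝ | ∃ z ∈ Z, r = dist2 y z}}

/-- The connectivity constant `κ = 2(ρ + ν)` for balanced families. -/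
noncomputable def kappaB (U : Finset (Finset Site)) (SB : Set (ℝ × ℝ)) (a : ℕ) : ℝ :=
  2 * (rho U SB a + nu U)

/-- A valid choice of the finite set `S_B` of stable directions for a balanced family:
`ᾱ(u) ≥ α` for all `u ∈ S_B`, and `S_B` meets every open semicircle. -/
def ValidSB (U : Finset (Finset Site)) (a : ℕ) (SB : Set (ℝ × ℝ)) : Prop :=
  SB.Finite ∧ SB ⊆ stableSet U ∧ (∀ u ∈ SB, (a : ℕ∞) ≤ alphaBar U u) ∧
  ∀ w : ℝ × ℝ, unitVec w → ∃ u ∈ SB, 0 < ipR u w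

/-- `D` is internally spanned by `A`: some strongly connected subset `L` of `[D ∩ A]`
has `D` as the smallest `T`-droplet containing it. -/
def InternallySpanned (U : Finset (Finset Site)) (T : Set (ℝ × ℝ)) (κ : ℝ)
    (A D : Set Site) : Prop :=
  ∃ L : Set Site, L ⊆ bclosure U (D ∩ A) ∧ Conn κ L ∧ IsMinDroplet T L D

/-- A valid choice of the set `S_U = {u*, −u*, u^l, u^r}` of stable directions for an
unbalanced family: `min {α(u*), α(−u*)} ≥ α + 1`, `u^l` (resp. `u^r`) lies in the open
semicircle to the left (resp. right) of `u*`, and `min {ᾱ(u^l), ᾱ(u^r)} = α`. -/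
def ValidSU (U : Finset (Finset Site)) (a : ℕ) (ustar ul ur : ℝ × ℝ) : Prop :=
  ustar ∈ stableSet U ∧ -ustar ∈ stableSet U ∧ ul ∈ stableSet U ∧ ur ∈ stableSet U ∧
  (a : ℕ∞) + 1 ≤ difficulty U ustar ∧ (a : ℕ∞) + 1 ≤ difficulty U (-ustar) ∧
  0 < ipR ul (-ustar.2, ustar.1) ∧ 0 < ipR ur (ustar.2, -ustar.1) ∧
  min (alphaBar U ul) (alphaBar U ur) = (a : ℕ∞)

/-- The point of `S¹` at angle `θ`. -/
noncomputable def circlePt (θ : ℝ) : ℝ × ℝ := (Real.cos θ, Real.sin θ)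

/-- `u` is a rational direction: it is parallel to a nonzero integer vector,
i.e. it has rational or infinite slope. -/
def RationalDir (u : ℝ × ℝ) : Prop :=
  ∃ x : Site, x ≠ 0 ∧ (x.1 : ℝ) * u.2 = (x.2 : ℝ) * u.1

/-- The closed arc of directions from `u` to `v` (anticlockwise). -/
def arcFrom (u v : ℝ × ℝ) : Set (ℝ × ℝ) :=
  {w | ∃ θ₁ θ₂ θ : ℝ, circlePt θ₁ = u ∧ circlePt θ₂ = v ∧
    θ₁ ≤ θ₂ ∧ θ₂ < θ₁ + 2 * Real.pi ∧ θ ∈ Set.Icc θ₁ θ₂ ∧ circlePt θ = w}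

/-- `u` and `v` are consecutive elements of `T`:
`u ≠ v` and `T ∩ [u, v] = {u, v}`. -/
def ConsecutiveIn (T : Set (ℝ × ℝ)) (u v : ℝ × ℝ) : Prop :=
  u ≠ v ∧ T ∩ arcFrom u v = {u, v}

/-!
If `u` is unstable, `H_u` alone infects all of `ℓ_u`. If `u` is stable, every translate of `H_u`
is closed, so `[H_u ∪ Z] ∖ H_u` lies in a strip `0 ≤ ⟨x, u⟩ < Λ`. Write `ℓ_u = ℤ e` and let `χ`
be a linear coordinate along `ℓ_u` with `χ(e) = 1`. Since a rule moves `χ` by at most `W`, every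
site of `[H_u ∪ Z]` at level `χ ≥ c + W` (with `c` beyond `Z`) is infected by `H_u` together with
the slab of `[H_u ∪ Z] ∖ H_u` at levels `[c, c + W)`. The slabs at levels `c + k`, translated by
`-k e`, all lie in one finite parallelogram, so by pigeonhole two of them, `p > W` apart, agree
up to translation by `p e`. Then `[H_u ∪ slab]` is invariant under `+ p e`, and any infected
`j e` far enough along the line starts the progression `(j + p n) e`.
-/

section Closure

variable (U : Finset (Finset Site))

lemma iter_monotone (A : Set Site) : Monotone (iter U A) :=
  monotone_nat_of_le_succ fun _ => subset_union_left

lemma iter_subset_bclosure (A : Set Site) (t : ℕ) : iter U A t ⊆ bclosure U A :=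
  subset_iUnion (iter U A) t

lemma subset_bclosure (A : Set Site) : A ⊆ bclosure U A :=
  iter_subset_bclosure U A 0

lemma step_mono {A B : Set Site} (h : A ⊆ B) : step U A ⊆ step U B := by
  rintro x (hx | ⟨X, hX, hXA⟩)
  · exact Or.inl (h hx)
  · exact Or.inr ⟨X, hX, fun y hy => h (hXA y hy)⟩

lemma bclosure_subset {A B : Set Site} (hAB : A ⊆ B) (hB : step U B ⊆ B) :
    bclosure U A ⊆ B := by
  refine iUnion_subset fun t => ?_
  induction t with
  | zero => exact hAB
  | succ t ih => exact (step_mono U ih).trans hB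

lemma step_bclosure_subset (A : Set Site) : step U (bclosure U A) ⊆ bclosure U A := by
  rintro x (hx | ⟨X, hX, hXA⟩)
  · exact hx
  · obtain ⟨t, ht⟩ := (iter_monotone U A).directed_le.exists_mem_subset_of_finset_subset_biUnion
      (s := X.image (x + ·)) (by rw [Finset.coe_image, image_subset_iff]; exact hXA)
    exact iter_subset_bclosure U A (t + 1)
      (Or.inr ⟨X, hX, fun y hy => ht (Finset.mem_image_of_mem _ hy)⟩)

lemma bclosure_subset_bclosure {A B : Set Site} (h : A ⊆ bclosure U B) :
    bclosure U A ⊆ bclosure U B :=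
  bclosure_subset U h (step_bclosure_subset U B)

lemma bclosure_mono {A B : Set Site} (h : A ⊆ B) : bclosure U A ⊆ bclosure U B :=
  bclosure_subset_bclosure U (h.trans (subset_bclosure U B))

lemma step_preimage_add (v : Site) (A : Set Site) :
    step U ((· + v) ⁻¹' A) = (· + v) ⁻¹' step U A := by
  ext x
  simp only [step, mem_union, mem_preimage, mem_ofPred_eq, add_right_comm]

lemma add_mem_bclosure {A : Set Site} {v : Site} (hA : ∀ x ∈ A, x + v ∈ bclosure U A)
    {x : Site} (hx : x ∈ bclosure U A) : x + v ∈ bclosure U A := by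
  refine bclosure_subset U (B := (· + v) ⁻¹' bclosure U A) hA ?_ hx
  rw [step_preimage_add]
  exact preimage_mono (step_bclosure_subset U A)

lemma add_nsmul_mem_bclosure {A : Set Site} {v : Site} (hA : ∀ x ∈ A, x + v ∈ bclosure U A)
    {x : Site} (hx : x ∈ bclosure U A) (n : ℕ) : x + n • v ∈ bclosure U A := by
  induction n with
  | zero => simpa using hx
  | succ n ih => rw [succ_nsmul, ← add_assoc]; exact add_mem_bclosure U hA ih

end Closure

section InnerProduct

lemma ip_add (x y : Site) (u : ℝ × ℝ) : ip (x + y) u = ip x u + ip y u := by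
  simp only [ip, Prod.fst_add, Prod.snd_add, Int.cast_add]; ring

lemma ip_zsmul (m : ℤ) (x : Site) (u : ℝ × ℝ) : ip (m • x) u = m * ip x u := by
  simp only [ip, Prod.smul_fst, Prod.smul_snd, smul_eq_mul, Int.cast_mul]; ring

lemma ip_nsmul (n : ℕ) (x : Site) (u : ℝ × ℝ) : ip (n • x) u = n * ip x u := by
  rw [← natCast_zsmul, ip_zsmul, Int.cast_natCast]

variable {u w : ℝ × ℝ}

lemma ip_sq_add_ip_rightPerp_sq (hu : unitVec u) (x : Site) :
    ip x u ^ 2 + ip x (rightPerp u) ^ 2 = (x.1 : ℝ) ^ 2 + (x.2 : ℝ) ^ 2 := by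
  unfold unitVec at hu
  simp only [ip, rightPerp]
  linear_combination ((x.1 : ℝ) ^ 2 + (x.2 : ℝ) ^ 2) * hu

lemma ip_rightPerp_ne_zero (hu : unitVec u) {e : Site} (he : e ∈ line u) (he0 : e ≠ 0) :
    ip e (rightPerp u) ≠ 0 := by
  intro h
  have hsq := ip_sq_add_ip_rightPerp_sq hu e
  rw [show ip e u = 0 from he, h] at hsq
  have h1 : (e.1 : ℝ) = 0 := by nlinarith [sq_nonneg (e.1 : ℝ), sq_nonneg (e.2 : ℝ)]
  have h2 : (e.2 : ℝ) = 0 := by nlinarith [sq_nonneg (e.1 : ℝ), sq_nonneg (e.2 : ℝ)]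
  exact he0 (Prod.ext (by exact_mod_cast h1) (by exact_mod_cast h2))

lemma exists_ip_eq_one (hu : unitVec u) {e : Site} (he : e ∈ line u) (he0 : e ≠ 0) :
    ∃ w : ℝ × ℝ, ip e w = 1 ∧ u.1 * w.2 - u.2 * w.1 ≠ 0 := by
  set κ := ip e (rightPerp u)
  have hκ : κ ≠ 0 := ip_rightPerp_ne_zero hu he he0
  refine ⟨(u.2 / κ, -u.1 / κ), ?_, ?_⟩
  · rw [← div_self hκ]
    simp only [κ, ip, rightPerp]
    ring
  · have : u.1 * (-u.1 / κ) - u.2 * (u.2 / κ) = -1 / κ := by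
      rw [← (hu : u.1 ^ 2 + u.2 ^ 2 = 1)]; ring
    rw [this]
    exact div_ne_zero (by norm_num) hκ

lemma exists_ip_lt (hu : u ≠ 0) (r : ℝ) : ∃ v : Site, ip v u < r := by
  obtain ⟨v₀, hv₀⟩ : ∃ v₀ : Site, ip v₀ u < 0 := by
    by_contra! h
    have h1 : u.1 ≤ 0 := by simpa [ip] using h (-1, 0)
    have h2 : u.2 ≤ 0 := by simpa [ip] using h (0, -1)
    have h3 : 0 ≤ u.1 := by simpa [ip] using h (1, 0)
    have h4 : 0 ≤ u.2 := by simpa [ip] using h (0, 1)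
    exact hu (Prod.ext (le_antisymm h1 h3) (le_antisymm h2 h4))
  obtain ⟨n, hn⟩ := exists_nat_gt (r / ip v₀ u)
  exact ⟨n • v₀, by rw [ip_nsmul]; exact (div_lt_iff_of_neg hv₀).1 hn⟩

lemma finite_abs_coe_le (M N : ℝ) : {x : Site | |(x.1 : ℝ)| ≤ M ∧ |(x.2 : ℝ)| ≤ N}.Finite := by
  have hIcc : ∀ {n : ℤ} {M : ℝ}, |(n : ℝ)| ≤ M → n ∈ Icc ⌈-M⌉ ⌊M⌋ := fun h =>
    ⟨Int.ceil_le.2 (neg_le_of_abs_le h), Int.le_floor.2 (le_of_abs_le h)⟩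
  exact ((finite_Icc _ _).prod (finite_Icc _ _)).subset fun x hx => ⟨hIcc hx.1, hIcc hx.2⟩

lemma finite_abs_ip_le (hdet : u.1 * w.2 - u.2 * w.1 ≠ 0) (R : ℝ) :
    {x : Site | |ip x u| ≤ R ∧ |ip x w| ≤ R}.Finite := by
  set D := u.1 * w.2 - u.2 * w.1
  have hD : 0 < |D| := abs_pos.2 hdet
  have hbound : ∀ a b s t : ℝ, |a| ≤ R → |b| ≤ R → |a * s - b * t| ≤ R * (|s| + |t|) :=
    fun a b s t ha hb => calc
      |a * s - b * t| ≤ |a| * |s| + |b| * |t| := by rw [← abs_mul, ← abs_mul]; exact abs_sub _ _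
      _ ≤ R * |s| + R * |t| := by gcongr
      _ = R * (|s| + |t|) := by ring
  refine (finite_abs_coe_le (R * (|w.2| + |u.2|) / |D|) (R * (|u.1| + |w.1|) / |D|)).subset ?_
  rintro x ⟨hxu, hxw⟩
  -- Cramer's rule
  have h1 : (x.1 : ℝ) * D = ip x u * w.2 - ip x w * u.2 := by simp only [D, ip]; ring
  have h2 : (x.2 : ℝ) * D = ip x w * u.1 - ip x u * w.1 := by simp only [D, ip]; ring
  constructor
  · rw [le_div_iff₀ hD, ← abs_mul, h1]; exact hbound _ _ _ _ hxu hxw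
  · rw [le_div_iff₀ hD, ← abs_mul, h2]; exact hbound _ _ _ _ hxw hxu

lemma finite_ip_mem_Ico (hdet : u.1 * w.2 - u.2 * w.1 ≠ 0) (a b c d : ℝ) :
    {x : Site | ip x u ∈ Ico a b ∧ ip x w ∈ Ico c d}.Finite := by
  refine (finite_abs_ip_le hdet (max (max |a| |b|) (max |c| |d|))).subset ?_
  rintro x ⟨⟨h1, h2⟩, ⟨h3, h4⟩⟩
  exact ⟨(abs_le_max_abs_abs h1 h2.le).trans (le_max_left _ _),
    (abs_le_max_abs_abs h3 h4.le).trans (le_max_right _ _)⟩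

end InnerProduct

section Line

lemma exists_zmultiples_eq_orthogonal (x : ℤ × ℤ) (hx : x ≠ 0) :
    ∃ e : ℤ × ℤ, e ≠ 0 ∧
      {z : ℤ × ℤ | z.1 * x.1 + z.2 * x.2 = 0} = AddSubgroup.zmultiples e := by
  have hg : 0 < Int.gcd x.1 x.2 :=
    Int.gcd_pos_iff.2 (by contrapose! hx; exact Prod.ext hx.1 hx.2)
  set g : ℤ := (Int.gcd x.1 x.2 : ℤ)
  set a := x.1 / g
  set b := x.2 / g
  have ha : a * g = x.1 := Int.ediv_mul_cancel (Int.gcd_dvd_left _ _)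
  have hb : b * g = x.2 := Int.ediv_mul_cancel (Int.gcd_dvd_right _ _)
  have hab : a * a.gcdA b + b * a.gcdB b = 1 := by
    rw [← Int.gcd_eq_gcd_ab, Int.gcd_div_gcd_div_gcd hg, Nat.cast_one]
  refine ⟨(b, -a), fun h => ?_, ?_⟩
  · simp only [Prod.ext_iff, Prod.fst_zero, Prod.snd_zero, neg_eq_zero] at h
    simp [h.1, h.2] at hab
  ext z
  simp only [mem_ofPred_eq, SetLike.mem_coe, AddSubgroup.mem_zmultiples_iff, Prod.ext_iff,
    Prod.smul_mk, smul_eq_mul]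
  constructor
  · intro hz
    have hz' : z.1 * a + z.2 * b = 0 := by
      have : (z.1 * a + z.2 * b) * g = 0 := by rw [← ha, ← hb] at hz; linear_combination hz
      exact (mul_eq_zero.1 this).resolve_right (by positivity)
    -- the coefficient comes from Bézout's identity `hab`
    refine ⟨a.gcdB b * z.1 - a.gcdA b * z.2, ?_, ?_⟩
    · linear_combination (-a.gcdA b) * hz' + z.1 * hab
    · linear_combination (-a.gcdB b) * hz' + z.2 * hab
  · rintro ⟨m, h1, h2⟩
    rw [← h1, ← h2, ← ha, ← hb]
    ring

variable {u : ℝ × ℝ}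

lemma ip_eq_zero_iff_of_parallel (hu : unitVec u) {x : Site} (hx : x ≠ 0)
    (hxu : (x.1 : ℝ) * u.2 = x.2 * u.1) (z : Site) :
    ip z u = 0 ↔ z.1 * x.1 + z.2 * x.2 = 0 := by
  have hn : (0 : ℝ) < (x.1 : ℝ) ^ 2 + (x.2 : ℝ) ^ 2 := by
    rcases not_and_or.1 (fun h : x.1 = 0 ∧ x.2 = 0 => hx (Prod.ext h.1 h.2)) with h | h <;>
      positivity
  -- `u` is the multiple `ip x u / |x|²` of `x`
  have hu1 : ((x.1 : ℝ) ^ 2 + (x.2 : ℝ) ^ 2) * u.1 = ip x u * x.1 := by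
    simp only [ip]; linear_combination (-(x.2 : ℝ)) * hxu
  have hu2 : ((x.1 : ℝ) ^ 2 + (x.2 : ℝ) ^ 2) * u.2 = ip x u * x.2 := by
    simp only [ip]; linear_combination (x.1 : ℝ) * hxu
  have hs : ip x u ≠ 0 := by
    intro h
    rw [h, zero_mul] at hu1 hu2
    unfold unitVec at hu
    rw [(mul_eq_zero.1 hu1).resolve_left hn.ne', (mul_eq_zero.1 hu2).resolve_left hn.ne'] at hu
    norm_num at hu
  have key : ((x.1 : ℝ) ^ 2 + (x.2 : ℝ) ^ 2) * ip z u = ip x u * (z.1 * x.1 + z.2 * x.2) := by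
    simp only [ip]; linear_combination ((z.2 : ℝ) * x.1 - z.1 * x.2) * hxu
  constructor
  · intro h
    rw [h, mul_zero, eq_comm] at key
    exact_mod_cast (mul_eq_zero.1 key).resolve_left hs
  · intro h
    have h' : ((z.1 : ℝ) * x.1 + z.2 * x.2) = 0 := by exact_mod_cast h
    rw [h', mul_zero] at key
    exact (mul_eq_zero.1 key).resolve_left hn.ne'

lemma exists_line_eq_zmultiples (hu : unitVec u) (hur : RationalDir u) :
    ∃ e : Site, e ≠ 0 ∧ line u = AddSubgroup.zmultiples e := by
  obtain ⟨x, hx, hxu⟩ := hur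
  obtain ⟨e, he, hL⟩ := exists_zmultiples_eq_orthogonal x hx
  refine ⟨e, he, ?_⟩
  rw [← hL]
  ext z
  exact ip_eq_zero_iff_of_parallel hu hx hxu z

lemma exists_nsmul_eq_of_mem_line {e x : Site} (hline : line u = AddSubgroup.zmultiples e)
    (he : ip e (rightPerp u) ≠ 0) (hx : x ∈ line u)
    (hsign : 0 ≤ ip x (rightPerp u) * ip e (rightPerp u)) : ∃ n : ℕ, n • e = x := by
  rw [hline] at hx
  obtain ⟨m, rfl⟩ := AddSubgroup.mem_zmultiples_iff.1 hx
  rw [ip_zsmul, mul_assoc] at hsign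
  have hm : 0 ≤ m := by exact_mod_cast nonneg_of_mul_nonneg_left hsign (mul_self_pos.2 he)
  exact ⟨m.toNat, by rw [← natCast_zsmul, Int.toNat_of_nonneg hm]⟩

end Line

lemma infinite_nsmul_mem_or_infinite_nsmul_neg_mem {G : Type*} [AddGroup G] {S : Set G} {e : G}
    (h : (S ∩ AddSubgroup.zmultiples e).Infinite) :
    {n : ℕ | n • e ∈ S}.Infinite ∨ {n : ℕ | n • -e ∈ S}.Infinite := by
  contrapose! h
  refine ((h.1.image (· • e)).union (h.2.image (· • -e))).subset ?_
  rintro _ ⟨hx, m, rfl⟩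
  obtain ⟨n, rfl | rfl⟩ := Int.eq_nat_or_neg m
  · exact Or.inl ⟨n, by simpa using hx, by simp⟩
  · exact Or.inr ⟨n, by simpa using hx, by simp⟩

lemma exists_add_nsmul_mem_of_finite {G : Type*} [AddCommGroup G] {e : G} {S : ℕ → Set G}
    {F : Set G} (hF : F.Finite) (hS : ∀ k, (· + k • e) ⁻¹' S k ⊆ F) (J : ℕ) :
    ∃ k p : ℕ, J < p ∧ ∀ x ∈ S k, x + p • e ∈ S (k + p) := by
  obtain ⟨n, n', hnn', heq⟩ := hF.finite_subsets.exists_lt_map_eq_of_forall_mem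
    (f := fun n : ℕ => (· + (n * (J + 1)) • e) ⁻¹' S (n * (J + 1))) fun n => hS _
  have hk : n * (J + 1) + (n' - n) * (J + 1) = n' * (J + 1) := by
    rw [← add_mul, Nat.add_sub_cancel' hnn'.le]
  refine ⟨n * (J + 1), (n' - n) * (J + 1),
    Nat.lt_of_lt_of_le J.lt_succ_self (Nat.le_mul_of_pos_left _ (Nat.sub_pos_of_lt hnn')),
    fun x hx => ?_⟩
  have hmem : x - (n * (J + 1)) • e ∈ (· + (n * (J + 1)) • e) ⁻¹' S (n * (J + 1)) := by
    simpa using hx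
  rwa [heq, mem_preimage, ← hk, add_nsmul, ← add_assoc, sub_add_cancel] at hmem

section Growth

variable (U : Finset (Finset Site)) {u : ℝ × ℝ}

lemma line_subset_bclosure_of_not_isStable (hs : ¬ IsStable U u) :
    line u ⊆ bclosure U (halfPlane u) := by
  obtain ⟨x, hx, hxH⟩ : ∃ x ∈ step U (halfPlane u), x ∉ halfPlane u := by
    by_contra! h
    exact hs (subset_antisymm (bclosure_subset U subset_rfl h) (subset_bclosure U _))
  rcases hx with hx | ⟨X, hX, hXH⟩
  · exact absurd hx hxH
  intro z hz
  refine iter_subset_bclosure U _ 1 (Or.inr ⟨X, hX, fun y hy => ?_⟩)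
  have hxy : ip (x + y) u < 0 := hXH y hy
  have hx0 : 0 ≤ ip x u := not_lt.1 hxH
  show ip (z + y) u < 0
  rw [ip_add] at hxy ⊢
  rw [show ip z u = 0 from hz]
  linarith

lemma exists_bclosure_subset_ip_lt (hu : u ≠ 0) (hs : IsStable U u) (Z : Finset Site) :
    ∃ Λ : ℝ, bclosure U (halfPlane u ∪ ↑Z) ⊆ {x | ip x u < Λ} := by
  obtain ⟨r, hr⟩ := (Z.image (ip · u)).exists_le
  obtain ⟨v, hv⟩ := exists_ip_lt hu (min 0 (-r))
  have hshift : {x | ip x u < -ip v u} = (· + v) ⁻¹' halfPlane u := by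
    ext x
    simp only [halfPlane, mem_ofPred_eq, mem_preimage, ip_add]
    constructor <;> intro <;> linarith
  refine ⟨-ip v u, bclosure_subset U ?_ ?_⟩
  · rintro x (hx | hx) <;> show ip x u < -ip v u
    · have : ip x u < 0 := hx
      linarith [min_le_left 0 (-r)]
    · linarith [hr _ (Finset.mem_image_of_mem _ hx), min_le_right 0 (-r)]
  · rw [hshift, step_preimage_add]
    exact preimage_mono fun x hx => hs ▸ iter_subset_bclosure U _ 1 hx

lemma exists_rule_bound (w : ℝ × ℝ) : ∃ W : ℕ, ∀ X ∈ U, ∀ y ∈ X, |ip y w| ≤ W := by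
  obtain ⟨R, hR⟩ := ((U.biUnion id).image fun y => |ip y w|).exists_le
  obtain ⟨W, hW⟩ := exists_nat_ge R
  exact ⟨W, fun X hX y hy =>
    (hR _ (Finset.mem_image_of_mem _ (Finset.mem_biUnion.2 ⟨X, hX, hy⟩))).trans hW⟩

def slab (Y H : Set Site) (w : ℝ × ℝ) (a b : ℝ) : Set Site :=
  {x ∈ Y | x ∉ H ∧ ip x w ∈ Ico a b}

lemma mem_bclosure_union_slab {A H : Set Site} {w : ℝ × ℝ} {c W : ℝ}
    (hW : ∀ X ∈ U, ∀ y ∈ X, |ip y w| ≤ W) (hA : ∀ x ∈ A, x ∉ H → ip x w < c + W)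
    {x : Site} (hx : x ∈ bclosure U A) (hxw : c + W ≤ ip x w) :
    x ∈ bclosure U (H ∪ slab (bclosure U A) H w c (c + W)) := by
  obtain ⟨t, ht⟩ := mem_iUnion.1 hx
  clear hx
  induction t generalizing x with
  | zero => exact subset_bclosure U _ (Or.inl (by_contra fun hxH => (hA x ht hxH).not_ge hxw))
  | succ t ih =>
    rcases ht with ht | ⟨X, hX, hXt⟩
    · exact ih hxw ht
    refine step_bclosure_subset U _ (Or.inr ⟨X, hX, fun y hy => ?_⟩)
    have hxy := hXt y hy
    have hlow : c ≤ ip (x + y) w := by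
      rw [ip_add]; linarith [neg_abs_le (ip y w), hW X hX y hy]
    by_cases hfar : c + W ≤ ip (x + y) w
    · exact ih hfar hxy
    by_cases hH : x + y ∈ H
    · exact subset_bclosure U _ (Or.inl hH)
    · exact subset_bclosure U _
        (Or.inr ⟨iter_subset_bclosure U A t hxy, hH, hlow, not_le.1 hfar⟩)

end Growth

section Periodicity

variable (U : Finset (Finset Site)) {u w : ℝ × ℝ} {e : Site}

lemma exists_translate_slab (he : ip e u = 0) (hew : ip e w = 1)
    (hdet : u.1 * w.2 - u.2 * w.1 ≠ 0) {Y : Set Site} {Λ : ℝ} (hΛ : Y ⊆ {x | ip x u < Λ})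
    (c : ℝ) (W : ℕ) :
    ∃ k p : ℕ, W < p ∧ ∀ x ∈ slab Y (halfPlane u) w (c + k) (c + k + W),
      x + p • e ∈ slab Y (halfPlane u) w (c + ↑(k + p)) (c + ↑(k + p) + W) := by
  refine exists_add_nsmul_mem_of_finite (finite_ip_mem_Ico hdet 0 Λ c (c + W)) ?_ W
  rintro k x ⟨hxY, hxH, hx1, hx2⟩
  have hxΛ : ip (x + k • e) u < Λ := hΛ hxY
  simp only [halfPlane, mem_ofPred_eq, not_lt, ip_add, ip_nsmul, he, hew] at hxΛ hxH hx1 hx2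
  exact ⟨⟨by linarith, by linarith⟩, ⟨by linarith, by linarith⟩⟩

lemma exists_arithProg_of_isStable (hs : IsStable U u) (he : ip e u = 0) (hew : ip e w = 1)
    (hdet : u.1 * w.2 - u.2 * w.1 ≠ 0) (Z : Finset Site)
    (hinf : {n : ℕ | n • e ∈ bclosure U (halfPlane u ∪ ↑Z)}.Infinite) :
    ∃ j p : ℕ, 0 < p ∧ ∀ n : ℕ, (j + p * n) • e ∈ bclosure U (halfPlane u ∪ ↑Z) := by
  set H := halfPlane u
  set Y := bclosure U (H ∪ ↑Z)
  obtain ⟨Λ, hΛ⟩ := exists_bclosure_subset_ip_lt U (by rintro rfl; simp at hdet) hs Z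
  obtain ⟨W, hW⟩ := exists_rule_bound U w
  obtain ⟨c, hc⟩ : ∃ c : ℝ, ∀ z ∈ Z, ip z w < c :=
    let ⟨r, hr⟩ := (Z.image (ip · w)).exists_le
    ⟨r + 1, fun z hz => (hr _ (Finset.mem_image_of_mem _ hz)).trans_lt (lt_add_one r)⟩
  obtain ⟨k, p, hWp, hper⟩ := exists_translate_slab he hew hdet hΛ c W
  set Y₁ := bclosure U (H ∪ slab Y H w (c + k) (c + k + W))
  have hlocal : ∀ x ∈ Y, c + k + W ≤ ip x w → x ∈ Y₁ := by
    refine fun x hx hxw => mem_bclosure_union_slab U hW (fun z hz hzH => ?_) hx hxw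
    have : (0 : ℝ) ≤ k + W := by positivity
    linarith [hc z (hz.resolve_left hzH)]
  have hshift : ∀ x ∈ H ∪ slab Y H w (c + k) (c + k + W), x + p • e ∈ Y₁ := by
    rintro x (hx | hx)
    · refine subset_bclosure U _ (Or.inl ?_)
      show ip (x + p • e) u < 0
      rw [ip_add, ip_nsmul, he, mul_zero, add_zero]
      exact hx
    · obtain ⟨hxY, -, hxw, -⟩ := hper x hx
      push_cast at hxw
      exact hlocal _ hxY (by linarith [(Nat.cast_le.2 hWp.le : (W : ℝ) ≤ p)])
  have hY₁ : Y₁ ⊆ Y := bclosure_subset_bclosure U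
    (union_subset (subset_union_left.trans (subset_bclosure U _)) fun _ hx => hx.1)
  obtain ⟨j, hjY, hj⟩ := hinf.exists_gt ⌈c + k + W⌉₊
  have hj₁ : j • e ∈ Y₁ := hlocal _ hjY <| by
    rw [ip_nsmul, hew, mul_one]
    exact (Nat.le_ceil _).trans (Nat.cast_le.2 hj.le)
  refine ⟨j, p, by omega, fun n => ?_⟩
  rw [add_nsmul, mul_nsmul]
  exact hY₁ (add_nsmul_mem_bclosure U hshift hj₁ n)

lemma exists_arithProg (hu : unitVec u) (he : e ∈ line u) (he0 : e ≠ 0) (Z : Finset Site)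
    (hinf : {n : ℕ | n • e ∈ bclosure U (halfPlane u ∪ ↑Z)}.Infinite) :
    ∃ j p : ℕ, 0 < p ∧ ∀ n : ℕ, (j + p * n) • e ∈ bclosure U (halfPlane u ∪ ↑Z) := by
  by_cases hs : IsStable U u
  · obtain ⟨w, hew, hdet⟩ := exists_ip_eq_one hu he he0
    exact exists_arithProg_of_isStable U hs he hew hdet Z hinf
  · refine ⟨0, 1, one_pos, fun n => bclosure_mono U subset_union_left
      (line_subset_bclosure_of_not_isStable U hs ?_)⟩
    show ip _ u = 0
    rw [ip_nsmul, show ip e u = 0 from he, mul_zero]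

lemma semiperiodic_of_arithProg (hu : unitVec u) (hline : line u = AddSubgroup.zmultiples e)
    (he0 : e ≠ 0) {Y : Set Site} {j p : ℕ} (hp : 0 < p) (hY : ∀ n : ℕ, (j + p * n) • e ∈ Y) :
    ∃ b : Site, b ∈ line u ∧ ∃ k : ℕ, 0 < k ∧
      ((∀ x ∈ linePlus u, b + k • x ∈ Y ∩ line u) ∨
       (∀ x ∈ lineMinus u, b + k • x ∈ Y ∩ line u)) := by
  have he : e ∈ line u := hline ▸ AddSubgroup.mem_zmultiples e
  have hperp := ip_rightPerp_ne_zero hu he he0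
  have hmem : ∀ x ∈ line u, 0 ≤ ip x (rightPerp u) * ip e (rightPerp u) →
      j • e + p • x ∈ Y ∩ line u := by
    intro x hx hsign
    obtain ⟨n, rfl⟩ := exists_nsmul_eq_of_mem_line hline hperp hx hsign
    refine ⟨by rw [← mul_nsmul', ← add_nsmul]; exact hY n, ?_⟩
    show ip _ u = 0
    simp only [ip_add, ip_nsmul, show ip e u = 0 from he, mul_zero, add_zero]
  refine ⟨j • e, ?_, p, hp, ?_⟩
  · show ip _ u = 0
    rw [ip_nsmul, show ip e u = 0 from he, mul_zero]
  rcases hperp.lt_or_gt with hneg | hpos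
  · exact Or.inr fun x hx => hmem x hx.1 (mul_nonneg_of_nonpos_of_nonpos hx.2 hneg.le)
  · exact Or.inl fun x hx => hmem x hx.1 (mul_nonneg hx.2 hpos.le)

end Periodicity

theorem voracious_semiperiodic_general
    (U : Finset (Finset Site))
    (u : ℝ × ℝ) (hu : unitVec u) (hur : RationalDir u)
    (Z : Finset Site)
    (hZvor : (bclosure U (halfPlane u ∪ ↑Z) ∩ line u).Infinite) :
    ∃ b : Site, b ∈ line u ∧ ∃ k : ℕ, 0 < k ∧
      ((∀ x ∈ linePlus u, b + k • x ∈ bclosure U (halfPlane u ∪ ↑Z) ∩ line u) ∨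
       (∀ x ∈ lineMinus u, b + k • x ∈ bclosure U (halfPlane u ∪ ↑Z) ∩ line u)) := by
  obtain ⟨e₀, he₀, hline₀⟩ := exists_line_eq_zmultiples hu hur
  obtain ⟨e, he0, hline, hinf⟩ : ∃ e : Site, e ≠ 0 ∧ line u = AddSubgroup.zmultiples e ∧
      {n : ℕ | n • e ∈ bclosure U (halfPlane u ∪ ↑Z)}.Infinite := by
    rcases infinite_nsmul_mem_or_infinite_nsmul_neg_mem (hline₀ ▸ hZvor) with h | h
    · exact ⟨e₀, he₀, hline₀, h⟩
    · exact ⟨-e₀, neg_ne_zero.2 he₀, by rw [hline₀, AddSubgroup.zmultiples_neg], h⟩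
  obtain ⟨j, p, hp, hjp⟩ :=
    exists_arithProg U hu (hline ▸ AddSubgroup.mem_zmultiples e) he0 Z hinf
  exact semiperiodic_of_arithProg hu hline he0 hp hjp

/-- **Semi-periodicity (Lemma 3.2).**  If `U` is critical with difficulty `α`, `u` is a
rational direction with `α(u) ≤ α`, and `Z` is voracious with respect to `u`, then
`[H_u ∪ Z] ∩ ℓ_u` contains a homothetic copy of `ℓ_u⁺` or of `ℓ_u⁻`. -/
theorem voracious_semiperiodic
    (U : Finset (Finset Site)) (hU : ∀ X ∈ U, (0 : Site) ∉ X)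
    (hcrit : Critical U) (u : ℝ × ℝ) (hu : unitVec u) (hur : RationalDir u)
    (hdiff : difficulty U u ≤ famDifficulty U)
    (Z : Finset Site) (hZcard : (Z.card : ℕ∞) ≤ difficulty U u)
    (hZvor : (bclosure U (halfPlane u ∪ ↑Z) ∩ line u).Infinite) :
    ∃ b : Site, b ∈ line u ∧ ∃ k : ℕ, 0 < k ∧
      ((∀ x ∈ linePlus u, b + k • x ∈ bclosure U (halfPlane u ∪ ↑Z) ∩ line u) ∨
       (∀ x ∈ lineMinus u, b + k • x ∈ bclosure U (halfPlane u ∪ ↑Z) ∩ line u)) :=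
  voracious_semiperiodic_general U u hu hur Z hZvor

end BP
end

section
/- Let U be any two-dimensional bootstrap percolation update family with stable set S. Then there exists a finite set Q ⊆ S¹ such that for every pair u, v of consecutive elements of S ∪ Q (i.e. u ≠ v and (S ∪ Q) ∩ [u,v] = {u,v}, where [u,v] is the closed interval of directions between u and v) there exists an update rule X ∈ U with X ⊆ (H_u ∪ ℓ_u) ∩ (H_v ∪ ℓ_v). -/
open MeasureTheory Filter Set

namespace BP

/-- The unit vector perpendicular to the site `y`. -/
noncomputable def nvec (y : Site) : ℝ × ℝ :=
  ((y.2 : ℝ) / Real.sqrt ((y.1 : ℝ) ^ 2 + (y.2 : ℝ) ^ 2),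
   -(y.1 : ℝ) / Real.sqrt ((y.1 : ℝ) ^ 2 + (y.2 : ℝ) ^ 2))

lemma sq_pos_of_ne (y : Site) (hy : y ≠ 0) : 0 < (y.1 : ℝ) ^ 2 + (y.2 : ℝ) ^ 2 := by
  have : y.1 ≠ 0 ∨ y.2 ≠ 0 := by
    by_contra h
    push_neg at h
    exact hy (Prod.ext h.1 h.2)
  rcases this with h | h
  · have h' : (y.1 : ℝ) ≠ 0 := Int.cast_ne_zero.mpr h
    positivity
  · have h' : (y.2 : ℝ) ≠ 0 := Int.cast_ne_zero.mpr h
    positivity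

lemma unit_nvec (y : Site) (hy : y ≠ 0) : unitVec (nvec y) := by
  have h := sq_pos_of_ne y hy
  have hr : Real.sqrt ((y.1 : ℝ) ^ 2 + (y.2 : ℝ) ^ 2) ^ 2 = (y.1 : ℝ) ^ 2 + (y.2 : ℝ) ^ 2 :=
    Real.sq_sqrt h.le
  have hrpos : 0 < Real.sqrt ((y.1 : ℝ) ^ 2 + (y.2 : ℝ) ^ 2) := Real.sqrt_pos.2 h
  unfold unitVec nvec
  field_simp
  linarith [hr]

lemma unit_neg {w : ℝ × ℝ} (h : unitVec w) : unitVec (-w) := by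
  unfold unitVec at *
  simpa using h

lemma stable_of_forall (U : Finset (Finset Site)) (u : ℝ × ℝ)
    (h : ∀ X ∈ U, ∃ y ∈ X, 0 ≤ ip y u) : IsStable U u := by
  have hstep : step U (halfPlane u) = halfPlane u := by
    apply Set.Subset.antisymm
    · rintro x (hx | ⟨X, hX, hall⟩)
      · exact hx
      · obtain ⟨y, hy, hy0⟩ := h X hX
        have h1 : ip (x + y) u < 0 := hall y hy
        have h2 := ip_add x y u
        simp only [halfPlane, Set.mem_setOf_eq]
        linarith
    · exact Set.subset_union_left
  have hiter : ∀ t, iter U (halfPlane u) t = halfPlane u := by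
    intro t
    induction t with
    | zero => rfl
    | succ n ih => rw [iter, ih, hstep]
  unfold IsStable bclosure
  simp only [hiter]
  exact Set.iUnion_const _

lemma eq_nvec_of_ip_zero (y : Site) (hy : y ≠ 0) (w : ℝ × ℝ) (hw : unitVec w)
    (h0 : ip y w = 0) : w = nvec y ∨ w = -nvec y := by
  have h := sq_pos_of_ne y hy
  set a : ℝ := (y.1 : ℝ) with ha
  set b : ℝ := (y.2 : ℝ) with hb
  set r : ℝ := Real.sqrt (a ^ 2 + b ^ 2) with hrdef
  have hr : r ^ 2 = a ^ 2 + b ^ 2 := Real.sq_sqrt h.le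
  have hrpos : 0 < r := Real.sqrt_pos.2 h
  have hip : a * w.1 + b * w.2 = 0 := h0
  have hunit : w.1 ^ 2 + w.2 ^ 2 = 1 := hw
  have hkey : (b * w.1 - a * w.2) ^ 2 = r ^ 2 := by
    have : (b * w.1 - a * w.2) ^ 2 =
        (a ^ 2 + b ^ 2) * (w.1 ^ 2 + w.2 ^ 2) - (a * w.1 + b * w.2) ^ 2 := by ring
    rw [this, hip, hunit, hr]
    ring
  have hcases : b * w.1 - a * w.2 = r ∨ b * w.1 - a * w.2 = -r := by
    have : (b * w.1 - a * w.2 - r) * (b * w.1 - a * w.2 + r) = 0 := by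
      nlinarith [hkey]
    rcases mul_eq_zero.mp this with h' | h'
    · left; linarith
    · right; linarith
  have hrne : r ≠ 0 := hrpos.ne'
  rcases hcases with hc | hc
  · left
    have h1 : w.1 * r = b := by
      refine mul_right_cancel₀ hrne ?_
      linear_combination b * hc + a * hip + w.1 * hr
    have h2 : w.2 * r = -a := by
      refine mul_right_cancel₀ hrne ?_
      linear_combination (-a) * hc + b * hip + w.2 * hr
    unfold nvec
    refine Prod.ext ?_ ?_
    · show w.1 = b / r
      field_simp
      linarith
    · show w.2 = -a / r
      field_simp
      linarith
  · right
    have h1 : w.1 * r = -b := by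
      refine mul_right_cancel₀ hrne ?_
      linear_combination b * hc + a * hip + w.1 * hr
    have h2 : w.2 * r = a := by
      refine mul_right_cancel₀ hrne ?_
      linear_combination (-a) * hc + b * hip + w.2 * hr
    unfold nvec
    rw [Prod.neg_mk]
    refine Prod.ext ?_ ?_
    · show w.1 = -(b / r)
      field_simp
      linarith
    · show w.2 = -(-a / r)
      field_simp
      linarith

lemma circlePt_inj {s t : ℝ} (h : circlePt s = circlePt t) (habs : |s - t| < 2 * Real.pi) :
    s = t := by
  have hc : Real.cos s = Real.cos t := congrArg Prod.fst h
  have hs : Real.sin s = Real.sin t := congrArg Prod.snd h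
  have hang : (s : Real.Angle) = (t : Real.Angle) := Real.Angle.cos_sin_inj hc hs
  obtain ⟨k, hk⟩ := Real.Angle.angle_eq_iff_two_pi_dvd_sub.mp hang
  have hpi := Real.two_pi_pos
  have : |(k : ℝ)| < 1 := by
    have h1 : |s - t| = 2 * Real.pi * |(k : ℝ)| := by
      rw [hk, abs_mul, abs_of_pos hpi]
    by_contra hcon
    push_neg at hcon
    nlinarith [h1, habs]
  have hk1 : |k| < 1 := by exact_mod_cast this
  rw [abs_lt] at hk1
  have : k = 0 := by omega
  rw [this] at hk
  push_cast at hk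
  linarith

lemma unit_circlePt (t : ℝ) : unitVec (circlePt t) := by
  unfold unitVec circlePt
  simp [Real.cos_sq_add_sin_sq]

/-- **Quasi-stability (Lemma 3.5).**  There is a finite set `Q` of directions such that
for every pair `u, v` of consecutive elements of `S ∪ Q` there is an update rule
`X ∈ U` with `X ⊆ (H_u ∪ ℓ_u) ∩ (H_v ∪ ℓ_v)`. -/
theorem quasistability
    (U : Finset (Finset Site)) (hU : ∀ X ∈ U, (0 : Site) ∉ X) :
    ∃ Q : Finset (ℝ × ℝ), (∀ q ∈ Q, unitVec q) ∧
      ∀ u v : ℝ × ℝ, ConsecutiveIn (stableSet U ∪ ↑Q) u v →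
        ∃ X ∈ U, ∀ x ∈ X, ip x u ≤ 0 ∧ ip x v ≤ 0 := by
  classical
  refine ⟨U.biUnion (fun X => X.biUnion (fun y => {nvec y, -nvec y})), ?_, ?_⟩
  · intro q hq
    simp only [Finset.mem_biUnion, Finset.mem_insert, Finset.mem_singleton] at hq
    obtain ⟨X, hX, y, hy, hq⟩ := hq
    have hy0 : y ≠ 0 := fun h => hU X hX (h ▸ hy)
    rcases hq with rfl | rfl
    · exact unit_nvec y hy0
    · exact unit_neg (unit_nvec y hy0)
  · set Q : Finset (ℝ × ℝ) := U.biUnion (fun X => X.biUnion (fun y => {nvec y, -nvec y}))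
      with hQdef
    rintro u v ⟨huv, harc⟩
    have hvmem : v ∈ (stableSet U ∪ ↑Q) ∩ arcFrom u v := by
      rw [harc]; right; rfl
    obtain ⟨_, θ₁, θ₂, θ, hcu, hcv, h12, hlt2, hθmem, hθv⟩ := hvmem
    have h12lt : θ₁ < θ₂ := by
      rcases lt_or_eq_of_le h12 with h | h
      · exact h
      · exact absurd (by rw [← hcu, ← hcv, h]) huv
    -- interior of the arc avoids `S ∪ Q`
    have hint : ∀ t ∈ Set.Ioo θ₁ θ₂, circlePt t ∉ stableSet U ∪ ↑Q := by
      intro t ht hmem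
      have hmem2 : circlePt t ∈ ({u, v} : Set (ℝ × ℝ)) := by
        rw [← harc]
        exact ⟨hmem, θ₁, θ₂, t, hcu, hcv, h12, hlt2,
          Set.mem_Icc.2 ⟨ht.1.le, ht.2.le⟩, rfl⟩
      have hpi := Real.two_pi_pos
      rcases hmem2 with h | h
      · have : t = θ₁ := circlePt_inj (h.trans hcu.symm) (by
          rw [abs_of_pos (by linarith [ht.1] : (0:ℝ) < t - θ₁)]
          linarith [ht.2])
        exact absurd this ht.1.ne'
      · rw [Set.mem_singleton_iff] at h
        have : t = θ₂ := circlePt_inj (h.trans hcv.symm) (by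
          rw [abs_of_neg (by linarith [ht.2] : t - θ₂ < 0)]
          linarith [ht.1])
        exact absurd this ht.2.ne
    -- choose a rule that is strictly negative at the midpoint
    set m : ℝ := (θ₁ + θ₂) / 2 with hm
    have hmmem : m ∈ Set.Ioo θ₁ θ₂ := ⟨by linarith, by linarith⟩
    have hmns : circlePt m ∉ stableSet U := fun h => hint m hmmem (Or.inl h)
    have hmnotstable : ¬ IsStable U (circlePt m) := fun h =>
      hmns ⟨unit_circlePt m, h⟩
    have hX : ∃ X ∈ U, ∀ y ∈ X, ip y (circlePt m) < 0 := by
      by_contra hcon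
      push_neg at hcon
      exact hmnotstable (stable_of_forall U _ (fun X hXU => by
        obtain ⟨y, hy, hy0⟩ := hcon X hXU
        exact ⟨y, hy, hy0⟩))
    obtain ⟨X, hXU, hXneg⟩ := hX
    refine ⟨X, hXU, ?_⟩
    -- no zeros of `ip y ∘ circlePt` in the interior
    have hzero : ∀ t ∈ Set.Ioo θ₁ θ₂, ∀ y ∈ X, ip y (circlePt t) ≠ 0 := by
      intro t ht y hy h0
      have hy0 : y ≠ 0 := fun h => hU X hXU (h ▸ hy)
      apply hint t ht
      right
      rcases eq_nvec_of_ip_zero y hy0 _ (unit_circlePt t) h0 with h | h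
      · rw [h]
        simp only [hQdef, Finset.coe_biUnion, Set.mem_iUnion, Finset.mem_coe]
        exact ⟨X, hXU, y, hy, by simp⟩
      · rw [h]
        simp only [hQdef, Finset.coe_biUnion, Set.mem_iUnion, Finset.mem_coe]
        exact ⟨X, hXU, y, hy, by simp⟩
    -- strict negativity throughout the interior, via the IVT
    have hneg : ∀ t ∈ Set.Ioo θ₁ θ₂, ∀ y ∈ X, ip y (circlePt t) < 0 := by
      intro t ht y hy
      rcases lt_trichotomy (ip y (circlePt t)) 0 with h | h | h
      · exact h
      · exact absurd h (hzero t ht y hy)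
      · exfalso
        have hg : Continuous fun s => ip y (circlePt s) := by
          simp only [ip, circlePt]
          fun_prop
        have h0mem : (0 : ℝ) ∈ Set.uIcc (ip y (circlePt m)) (ip y (circlePt t)) := by
          rw [Set.mem_uIcc]
          left
          exact ⟨(hXneg y hy).le, h.le⟩
        obtain ⟨s, hs, hgs⟩ := intermediate_value_uIcc hg.continuousOn h0mem
        have hsmem : s ∈ Set.Ioo θ₁ θ₂ := by
          rcases Set.mem_uIcc.mp hs with ⟨h1, h2⟩ | ⟨h1, h2⟩
          · exact ⟨lt_of_lt_of_le hmmem.1 h1, lt_of_le_of_lt h2 ht.2⟩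
          · exact ⟨lt_of_lt_of_le ht.1 h1, lt_of_le_of_lt h2 hmmem.2⟩
        exact hzero s hsmem y hy hgs
    -- take limits at the endpoints
    intro x hx
    have hg : Continuous fun s => ip x (circlePt s) := by
      simp only [ip, circlePt]
      fun_prop
    constructor
    · rw [← hcu]
      refine le_of_tendsto ((hg.tendsto θ₁).mono_left nhdsWithin_le_nhds)
        (Filter.eventually_of_mem (Ioo_mem_nhdsGT_of_mem ⟨le_refl θ₁, h12lt⟩) ?_)
      intro s hs
      exact (hneg s hs x hx).le
    · rw [← hcv]
      refine le_of_tendsto ((hg.tendsto θ₂).mono_left nhdsWithin_le_nhds)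
        (Filter.eventually_of_mem (Ioo_mem_nhdsLT_of_mem ⟨h12lt, le_refl θ₂⟩) ?_)
      intro s hs
      exact (hneg s hs x hx).le


end BP
end
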